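/- Let X₁, X₂, … be a strictly stationary and ergodic sequence of real random variables with finite essential supremum γ and with P(X₁ = γ) = P(X₁ = γ − a) = 0 for a fixed a > 0. Let (kₙ) satisfy 1 ≤ kₙ ≤ n, kₙ/n → 1, and let (N(t), t ≥ 0) be nonnegative integer-valued random variables with N(t) → ∞ almost surely as t → ∞. Then K(k_{N(t)}, N(t), a)/N(t) = (1/N(t)) Σ_{i=1}^{N(t)} 1{X_{k_{N(t)}:N(t)} − a < X_i < X_{k_{N(t)}:N(t)}} converges almost surely to P(X₁ > γ − a) as t → ∞. -/

import Mathlib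

/-!
Birkhoff's pointwise ergodic theorem (proved via Garsia's maximal inequality), applied to the
indicators `1{y₀ ≤ t}` on path space, makes the empirical distribution function of `X₀, …, X_{n-1}`
converge almost surely to the CDF `F` of `X₀` at each of countably many fixed points. All
observations lie below `γ` while a positive fraction exceed any `t < γ`, and only `n - kₙ = o(n)`
exceed `qₙ = X_{kₙ:n}`; hence `qₙ ↑ γ`. Writing `K(kₙ, n, a) = #{Xᵢ < qₙ} - #{Xᵢ ≤ qₙ - a}` and
squeezing both counts between empirical CDF values at fixed points, they behave like `F(γ⁻) = 1`
and `F((γ - a)⁻) = F(γ - a)`, the two atoms being null. Almost sure convergence along `n` then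
transfers to the random indices `N(t) → ∞`.
-/

open MeasureTheory Filter Set
open scoped Topology ENNReal

noncomputable section

/-- The shift map on real sequences. -/
def seqShift (y : ℕ → ℝ) : ℕ → ℝ := fun n => y (n + 1)

/-- The path map associating to each sample point the sequence of observations. -/
def path {Ω : Type*} (X : ℕ → Ω → ℝ) (ω : Ω) : ℕ → ℝ := fun n => X n ω

/-- The `k`-th smallest value (k counted from 1) among `x 0, …, x (n-1)`. -/
def ordStat (k n : ℕ) (x : ℕ → ℝ) : ℝ :=
  ((List.ofFn (fun i : Fin n => x i)).insertionSort (· ≤ ·)).getD (k - 1) 0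

/-- Number of observations among `x 0, …, x (n-1)` in the left `a`-neighborhood of the
`k`-th order statistic. -/
def nearCount (k n : ℕ) (a : ℝ) (x : ℕ → ℝ) : ℕ :=
  ((Finset.range n).filter
    (fun i => ordStat k n x - a < x i ∧ x i < ordStat k n x)).card

/-- Sum of observations among `x 0, …, x (n-1)` in the left `a`-neighborhood of the
`k`-th order statistic. -/
def nearSum (k n : ℕ) (a : ℝ) (x : ℕ → ℝ) : ℝ :=
  ∑ i ∈ Finset.range n,
    if ordStat k n x - a < x i ∧ x i < ordStat k n x then x i else 0

/-- The right endpoint `sup {x : P(X ≤ x) < 1}` of the support of `X`, as an extended real. -/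
def rightEndpoint {Ω : Type*} [MeasurableSpace Ω] (μ : Measure Ω) (X : Ω → ℝ) : EReal :=
  sSup ((fun r : ℝ => (r : EReal)) '' {r : ℝ | μ {ω | X ω ≤ r} < 1})


open Finset

section Birkhoff

variable {α : Type*} {T : α → α} {g : α → ℝ}

def birkhoffMax (T : α → α) (g : α → ℝ) (N : ℕ) : α → ℝ :=
  (range (N + 1)).sup' nonempty_range_add_one fun n => birkhoffSum T g n

lemma birkhoffMax_apply (N : ℕ) (y : α) :
    birkhoffMax T g N y =
      (range (N + 1)).sup' nonempty_range_add_one fun n => birkhoffSum T g n y :=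
  Finset.sup'_apply _ _ _

lemma birkhoffSum_le_birkhoffMax {n N : ℕ} (hn : n ≤ N) (y : α) :
    birkhoffSum T g n y ≤ birkhoffMax T g N y := by
  rw [birkhoffMax_apply]
  exact le_sup' (fun n => birkhoffSum T g n y) (mem_range.2 (Nat.lt_succ_of_le hn))

lemma birkhoffMax_nonneg (N : ℕ) (y : α) : 0 ≤ birkhoffMax T g N y := by
  simpa using birkhoffSum_le_birkhoffMax (T := T) (g := g) N.zero_le y

lemma monotone_birkhoffMax (y : α) : Monotone fun N => birkhoffMax T g N y := by
  intro N N' hN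
  dsimp only
  rw [birkhoffMax_apply]
  exact sup'_le _ _ fun n hn => birkhoffSum_le_birkhoffMax (by grind) y

lemma birkhoffMax_le_add_birkhoffMax_apply {N : ℕ} {y : α} (hpos : 0 < birkhoffMax T g N y) :
    birkhoffMax T g N y ≤ g y + birkhoffMax T g N (T y) := by
  obtain ⟨n, hn, hmax⟩ := exists_mem_eq_sup' nonempty_range_add_one fun n => birkhoffSum T g n y
  rw [birkhoffMax_apply, hmax] at hpos ⊢
  cases n with
  | zero => simp at hpos
  | succ m =>
    rw [birkhoffSum_succ']
    gcongr
    exact birkhoffSum_le_birkhoffMax (by grind) _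

lemma bddAbove_birkhoffSum_apply_iff (y : α) :
    BddAbove (range fun n => birkhoffSum T g n (T y)) ↔
      BddAbove (range fun n => birkhoffSum T g n y) := by
  simp only [bddAbove_def, forall_mem_range]
  constructor
  · rintro ⟨C, hC⟩
    refine ⟨max 0 (g y + C), fun n => ?_⟩
    cases n with
    | zero => simp
    | succ n => rw [birkhoffSum_succ']; exact le_max_of_le_right (by linarith [hC n])
  · rintro ⟨C, hC⟩
    refine ⟨C - g y, fun n => ?_⟩
    have := hC (n + 1)
    rw [birkhoffSum_succ'] at this
    linarith

variable [MeasurableSpace α] {μ : Measure α}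

lemma measurable_birkhoffSum (hT : Measurable T) (hg : Measurable g) (n : ℕ) :
    Measurable (birkhoffSum T g n) :=
  Finset.measurable_sum _ fun i _ => hg.comp (hT.iterate i)

lemma measurable_birkhoffMax (hT : Measurable T) (hg : Measurable g) (N : ℕ) :
    Measurable (birkhoffMax T g N) :=
  Finset.measurable_sup' _ fun n _ => measurable_birkhoffSum hT hg n

lemma integrable_birkhoffSum (hT : MeasurePreserving T μ μ) (hg : Integrable g μ) (n : ℕ) :
    Integrable (birkhoffSum T g n) μ :=
  integrable_finsetSum _ fun i _ => (hT.iterate i).integrable_comp_of_integrable hg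

lemma integrable_birkhoffMax (hT : MeasurePreserving T μ μ) (hg : Integrable g μ) (N : ℕ) :
    Integrable (birkhoffMax T g N) μ :=
  sup'_induction (p := (Integrable · μ)) _ _ (fun _ h₁ _ h₂ => h₁.sup h₂) fun n _ =>
    integrable_birkhoffSum hT hg n

/-- Garsia's argument: on `{M_N > 0}` we have `g ≥ M_N - M_N ∘ T`, and `M_N` vanishes off that
set, so the integral over it is at least `∫ M_N - ∫ M_N ∘ T = 0`. -/
lemma setIntegral_birkhoffMax_pos_nonneg (hT : MeasurePreserving T μ μ) (hgm : Measurable g)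
    (hg : Integrable g μ) (N : ℕ) :
    0 ≤ ∫ y in {y | 0 < birkhoffMax T g N y}, g y ∂μ := by
  set M := birkhoffMax T g N
  set A := {y | 0 < M y}
  have hMm : Measurable M := measurable_birkhoffMax hT.measurable hgm N
  have hA : MeasurableSet A := measurableSet_lt measurable_const hMm
  have hMi : Integrable M μ := integrable_birkhoffMax hT hg N
  have hMTi : Integrable (M ∘ T) μ := hT.integrable_comp_of_integrable hMi
  have hMT : ∫ y, M (T y) ∂μ = ∫ y, M y ∂μ := by
    rw [← integral_map hT.measurable.aemeasurable hMm.aestronglyMeasurable, hT.map_eq]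
  have hMA : ∫ y in A, M y ∂μ = ∫ y, M y ∂μ :=
    setIntegral_eq_integral_of_forall_compl_eq_zero fun y hy =>
      le_antisymm (not_lt.1 hy) (birkhoffMax_nonneg N y)
  calc (0 : ℝ) = ∫ y, M y ∂μ - ∫ y, M (T y) ∂μ := by rw [hMT, sub_self]
    _ ≤ ∫ y in A, M y ∂μ - ∫ y in A, M (T y) ∂μ := by
      rw [hMA]
      exact sub_le_sub_left (setIntegral_le_integral hMTi
        (ae_of_all _ fun y => birkhoffMax_nonneg N (T y))) _
    _ = ∫ y in A, (M y - M (T y)) ∂μ := (integral_sub hMi.integrableOn hMTi.integrableOn).symm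
    _ ≤ ∫ y in A, g y ∂μ :=
      setIntegral_mono_on (hMi.sub hMTi).integrableOn hg.integrableOn hA fun y hy => by
        have := birkhoffMax_le_add_birkhoffMax_apply hy
        linarith

theorem maximal_ergodic_theorem (hT : MeasurePreserving T μ μ) (hgm : Measurable g)
    (hg : Integrable g μ) :
    0 ≤ ∫ y in {y | ∃ n, 0 < birkhoffSum T g n y}, g y ∂μ := by
  have hunion : ⋃ N, {y | 0 < birkhoffMax T g N y} = {y | ∃ n, 0 < birkhoffSum T g n y} := by
    ext y
    simp only [mem_iUnion, mem_ofPred_eq]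
    refine ⟨fun ⟨N, hN⟩ => ?_, fun ⟨n, hn⟩ =>
      ⟨n, hn.trans_le (birkhoffSum_le_birkhoffMax le_rfl y)⟩⟩
    obtain ⟨n, -, hmax⟩ :=
      exists_mem_eq_sup' nonempty_range_add_one fun n => birkhoffSum T g n y
    exact ⟨n, by rwa [birkhoffMax_apply, hmax] at hN⟩
  rw [← hunion]
  refine ge_of_tendsto' (tendsto_setIntegral_of_monotone (fun N => ?_) (fun N N' hN y hy => ?_)
    hg.integrableOn) (setIntegral_birkhoffMax_pos_nonneg hT hgm hg)
  · exact measurableSet_lt measurable_const (measurable_birkhoffMax hT.measurable hgm N)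
  · exact hy.trans_le (monotone_birkhoffMax y hN)

/-- The set where the Birkhoff sums are unbounded above is invariant, hence trivial; it cannot be
of full measure when `∫ g < 0`, by the maximal ergodic theorem. -/
lemma measure_not_bddAbove_birkhoffSum (herg : Ergodic T μ) (hgm : Measurable g)
    (hg : Integrable g μ) (hneg : ∫ y, g y ∂μ < 0) :
    μ {y | ¬ BddAbove (range fun n => birkhoffSum T g n y)} = 0 := by
  set B := {y | ¬ BddAbove (range fun n => birkhoffSum T g n y)}
  have hB : MeasurableSet B :=
    (measurableSet_bddAbove_range (measurable_birkhoffSum herg.measurable hgm)).compl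
  have hinv : T ⁻¹' B = B := by
    ext y
    exact not_congr (bddAbove_birkhoffSum_apply_iff y)
  refine (herg.toPreErgodic.measure_self_or_compl_eq_zero hB hinv).resolve_right fun hBc => ?_
  have hsub : B ⊆ {y | ∃ n, 0 < birkhoffSum T g n y} := fun y hy => by
    by_contra! h
    exact hy ⟨0, forall_mem_range.2 fun n => not_lt.1 fun hn => h ⟨n, hn⟩⟩
  have hfull : ∀ᵐ y ∂μ, y ∈ {y | ∃ n, 0 < birkhoffSum T g n y} :=
    (measure_eq_zero_iff_ae_notMem.1 hBc).mono fun y hy => hsub (not_not.1 hy)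
  have := maximal_ergodic_theorem herg.toMeasurePreserving hgm hg
  rw [Measure.restrict_eq_self_of_ae_mem hfull] at this
  linarith

variable [IsProbabilityMeasure μ]

lemma ae_eventually_birkhoffAverage_lt (herg : Ergodic T μ) (hgm : Measurable g)
    (hg : Integrable g μ) {c : ℝ} (hc : ∫ y, g y ∂μ < c) :
    ∀ᵐ y ∂μ, ∀ᶠ n in atTop, birkhoffAverage ℝ T g n y < c := by
  obtain ⟨c', hgc', hc'c⟩ := exists_between hc
  have hnull := measure_not_bddAbove_birkhoffSum (g := fun y => g y - c') herg
    (hgm.sub measurable_const) (hg.sub (integrable_const c'))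
    (by rw [integral_sub hg (integrable_const c')]; simpa using hgc')
  filter_upwards [measure_eq_zero_iff_ae_notMem.1 hnull] with y hy
  obtain ⟨C, hC⟩ := not_not.1 hy
  have hsmall : ∀ᶠ n : ℕ in atTop, C / n < c - c' :=
    (tendsto_const_div_atTop_nhds_zero_nat C).eventually (gt_mem_nhds (sub_pos.2 hc'c))
  filter_upwards [hsmall, eventually_gt_atTop 0] with n hn hn0
  have hSn : birkhoffSum T g n y - n * c' ≤ C := by
    have := hC (mem_range_self n)
    simpa [birkhoffSum_sub, birkhoffSum, mul_comm] using this
  have hn0' : (0 : ℝ) < n := by exact_mod_cast hn0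
  rw [birkhoffAverage, smul_eq_mul, inv_mul_eq_div, div_lt_iff₀ hn0']
  rw [div_lt_iff₀ hn0'] at hn
  linarith

theorem ae_tendsto_birkhoffAverage (herg : Ergodic T μ) (hgm : Measurable g)
    (hg : Integrable g μ) :
    ∀ᵐ y ∂μ, Tendsto (birkhoffAverage ℝ T g · y) atTop (𝓝 (∫ y, g y ∂μ)) := by
  have hupper : ∀ᵐ y ∂μ, ∀ q : ℚ, ∫ y, g y ∂μ < q →
      ∀ᶠ n in atTop, birkhoffAverage ℝ T g n y < q :=
    ae_all_iff.2 fun q => eventually_imp_distrib_left.2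
      (ae_eventually_birkhoffAverage_lt herg hgm hg)
  have hlower : ∀ᵐ y ∂μ, ∀ q : ℚ, (q : ℝ) < ∫ y, g y ∂μ →
      ∀ᶠ n in atTop, (q : ℝ) < birkhoffAverage ℝ T g n y :=
    ae_all_iff.2 fun q => eventually_imp_distrib_left.2 fun hq => by
      filter_upwards [ae_eventually_birkhoffAverage_lt (g := fun y => -g y) (c := -q) herg
        hgm.neg hg.neg (by rw [integral_neg]; linarith)] with y hy
      filter_upwards [hy] with n hn
      rw [show (fun y => -g y) = -g from rfl, birkhoffAverage_neg] at hn
      simpa using hn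
  filter_upwards [hupper, hlower] with y hup hlow
  refine tendsto_order.2 ⟨fun b hb => ?_, fun b hb => ?_⟩
  · obtain ⟨q, hbq, hq⟩ := exists_rat_btwn hb
    exact (hlow q hq).mono fun n hn => hbq.trans hn
  · obtain ⟨q, hq, hqb⟩ := exists_rat_btwn hb
    exact (hup q hq).mono fun n hn => hn.trans hqb

end Birkhoff


section OrderStatistic

variable (x : ℕ → ℝ) {k n : ℕ}

def sortedSample (n : ℕ) (x : ℕ → ℝ) : List ℝ :=
  (List.ofFn fun i : Fin n => x i).insertionSort (· ≤ ·)

lemma ordStat_eq_getElem (hk : 1 ≤ k) (hkn : k ≤ n) :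
    ordStat k n x = (sortedSample n x)[k - 1]'(by simp [sortedSample]; omega) :=
  List.getD_eq_getElem _ _ _

lemma ordStat_mem (hk : 1 ≤ k) (hkn : k ≤ n) : ∃ i < n, ordStat k n x = x i := by
  have hmem := List.getElem_mem (l := sortedSample n x) (n := k - 1)
    (by simp [sortedSample]; omega)
  rw [← ordStat_eq_getElem x hk hkn, sortedSample, (List.perm_insertionSort _ _).mem_iff,
    List.mem_ofFn] at hmem
  obtain ⟨i, hi⟩ := hmem
  exact ⟨i, i.2, hi.symm⟩

lemma countP_sortedSample (P : ℝ → Prop) [DecidablePred P] :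
    (sortedSample n x).countP (fun v => decide (P v)) = #{i ∈ range n | P (x i)} := by
  rw [sortedSample, (List.perm_insertionSort _ _).countP_eq, List.ofFn_eq_map,
    show (List.finRange n).map (fun i : Fin n => x i) = ((List.finRange n).map (↑·)).map x from
      (List.map_map ..).symm,
    List.map_coe_finRange_eq_range, List.countP_map, card_def, filter_val,
    ← Multiset.countP_eq_card_filter]
  exact (Multiset.coe_countP _ _).symm

/-- Otherwise the `k` smallest observations would all be `≤ c`. -/
lemma lt_ordStat_of_card_lt {c : ℝ} (hkn : k ≤ n) (h : #{i ∈ range n | x i ≤ c} < k) :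
    c < ordStat k n x := by
  have hk : 1 ≤ k := by omega
  by_contra! hc
  rw [ordStat_eq_getElem x hk hkn] at hc
  set l := sortedSample n x
  have htake : ∀ v ∈ l.take k, v ≤ c := by
    intro v hv
    obtain ⟨j, hj, rfl⟩ := List.getElem_of_mem hv
    rw [List.getElem_take]
    have hjk : j < k := by simp at hj; omega
    refine le_trans ?_ hc
    rcases (Nat.le_pred_of_lt hjk).lt_or_eq with hlt | rfl
    · exact List.pairwise_iff_getElem.1 (List.pairwise_insertionSort _ _) _ _ _ _ hlt
    · rfl
  have := (List.take_sublist k l).countP_le (p := fun v => decide (v ≤ c))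
  rw [List.countP_eq_length.2 (by simpa using htake), List.length_take, countP_sortedSample] at this
  simp [l, sortedSample] at this
  omega

lemma nearCount_add_card_le {a : ℝ} (ha : 0 < a) :
    nearCount k n a x + #{i ∈ range n | x i ≤ ordStat k n x - a} =
      #{i ∈ range n | x i < ordStat k n x} := by
  rw [nearCount, ← card_union_of_disjoint]
  · congr 1
    ext i
    simp only [mem_filter]
    grind
  · rw [disjoint_filter]
    intro i _ h h'
    linarith [h.1]

end OrderStatistic

lemma tendsto_of_squeeze_nhdsLT {G : ℕ → ℝ → ℝ} {F : ℝ → ℝ} {s L : ℝ}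
    (hFL : Tendsto F (𝓝[<] s) (𝓝 L))
    (hG : ∀ q : ℚ, (q : ℝ) < s → Tendsto (G · q) atTop (𝓝 (F q)))
    {v w : ℕ → ℝ} (hlow : ∀ q : ℚ, (q : ℝ) < s → ∀ᶠ n in atTop, G n q ≤ v n)
    (hup : ∀ᶠ n in atTop, v n ≤ w n) (hw : Tendsto w atTop (𝓝 L)) :
    Tendsto v atTop (𝓝 L) := by
  refine tendsto_order.2 ⟨fun b hb => ?_, fun b hb =>
    (hw.eventually (gt_mem_nhds hb)).mp (hup.mono fun n h1 h2 => h1.trans_lt h2)⟩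
  obtain ⟨l, hl, hsub⟩ := mem_nhdsLT_iff_exists_Ioo_subset.1 (hFL (Ioi_mem_nhds hb))
  obtain ⟨q, hlq, hqs⟩ := exists_rat_btwn (mem_Iio.1 hl)
  have hFq : b < F q := hsub ⟨hlq, hqs⟩
  filter_upwards [(hG q hqs).eventually (lt_mem_nhds hFq), hlow q hqs] with n h1 h2
  exact h1.trans_le h2

def empiricalCDF (x : ℕ → ℝ) (n : ℕ) (t : ℝ) : ℝ := #{i ∈ range n | x i ≤ t} / n

lemma card_filter_range_div_le {p r : ℕ → Prop} [DecidablePred p] [DecidablePred r]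
    (h : ∀ i, p i → r i) (n : ℕ) :
    (#{i ∈ range n | p i} : ℝ) / n ≤ #{i ∈ range n | r i} / n := by
  gcongr with i
  exact h i

section Deterministic

variable (x : ℕ → ℝ) {γ : ℝ} {F : ℝ → ℝ} {k : ℕ → ℕ}

/-- Since `k n / n → 1` while a positive proportion of the observations exceeds any `t < γ`,
the `k n`-th order statistic eventually exceeds `t`. -/
lemma tendsto_ordStat (hx : ∀ i, x i ≤ γ)
    (hF : ∀ q : ℚ, Tendsto (empiricalCDF x · q) atTop (𝓝 (F q))) (hF1 : ∀ t < γ, F t < 1)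
    (hk : ∀ n, 1 ≤ n → 1 ≤ k n ∧ k n ≤ n)
    (hk1 : Tendsto (fun n => (k n : ℝ) / n) atTop (𝓝 1)) :
    Tendsto (fun n => ordStat (k n) n x) atTop (𝓝[≤] γ) := by
  have hle : ∀ᶠ n in atTop, ordStat (k n) n x ≤ γ := by
    filter_upwards [eventually_ge_atTop 1] with n hn
    obtain ⟨i, -, hi⟩ := ordStat_mem x (hk n hn).1 (hk n hn).2
    exact hi ▸ hx i
  have hgt : ∀ t < γ, ∀ᶠ n in atTop, t < ordStat (k n) n x := by
    intro t ht
    obtain ⟨q, htq, hqγ⟩ := exists_rat_btwn ht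
    have hlim : Tendsto (fun n => (k n : ℝ) / n - empiricalCDF x n q) atTop (𝓝 (1 - F q)) :=
      hk1.sub (hF q)
    filter_upwards [hlim.eventually (lt_mem_nhds (sub_pos.2 (hF1 q hqγ))),
      eventually_ge_atTop 1] with n hn hn1
    have hn0 : (0 : ℝ) < n := by exact_mod_cast hn1
    rw [empiricalCDF, ← sub_div, div_pos_iff_of_pos_right hn0, sub_pos, Nat.cast_lt] at hn
    exact htq.trans (lt_ordStat_of_card_lt x (hk n hn1).2 hn)
  exact tendsto_nhdsWithin_iff.2
    ⟨tendsto_order.2 ⟨hgt, fun b hb => hle.mono fun n h => h.trans_lt hb⟩, hle⟩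

theorem tendsto_nearCount_div {a : ℝ} (ha : 0 < a) (hx : ∀ i, x i ≤ γ)
    (hF : ∀ q : ℚ, Tendsto (empiricalCDF x · q) atTop (𝓝 (F q)))
    (hFa : Tendsto (empiricalCDF x · (γ - a)) atTop (𝓝 (F (γ - a))))
    (hF1 : ∀ t < γ, F t < 1) (hFγ : Tendsto F (𝓝[<] γ) (𝓝 1))
    (hFγa : Tendsto F (𝓝[<] (γ - a)) (𝓝 (F (γ - a))))
    (hk : ∀ n, 1 ≤ n → 1 ≤ k n ∧ k n ≤ n)
    (hk1 : Tendsto (fun n => (k n : ℝ) / n) atTop (𝓝 1)) :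
    Tendsto (fun n => (nearCount (k n) n a x : ℝ) / n) atTop (𝓝 (1 - F (γ - a))) := by
  set q := fun n => ordStat (k n) n x
  obtain ⟨hqγ, hqle⟩ := tendsto_nhdsWithin_iff.1 (tendsto_ordStat x hx hF hF1 hk hk1)
  have hbelow : Tendsto (fun n => (#{i ∈ range n | x i < q n} : ℝ) / n) atTop (𝓝 1) := by
    refine tendsto_of_squeeze_nhdsLT hFγ (fun r _ => hF r) (fun r hr => ?_)
      (Eventually.of_forall fun n => ?_) tendsto_const_nhds
    · filter_upwards [hqγ.eventually (lt_mem_nhds hr)] with n hn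
      exact card_filter_range_div_le (fun i hi => hi.trans_lt hn) n
    · exact div_le_one_of_le₀ (by exact_mod_cast (card_filter_le _ _).trans (card_range n).le)
        n.cast_nonneg
  have hgap : Tendsto (fun n => (#{i ∈ range n | x i ≤ q n - a} : ℝ) / n) atTop
      (𝓝 (F (γ - a))) := by
    refine tendsto_of_squeeze_nhdsLT hFγa (fun r _ => hF r) (fun r hr => ?_) ?_ hFa
    · filter_upwards [hqγ.eventually (lt_mem_nhds (lt_sub_iff_add_lt.1 hr))] with n hn
      exact card_filter_range_div_le (fun i hi => by linarith) n
    · filter_upwards [hqle] with n hn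
      exact card_filter_range_div_le (fun i hi => by linarith [mem_Iic.1 hn]) n
  refine (hbelow.sub hgap).congr fun n => ?_
  rw [← sub_div, ← nearCount_add_card_le x ha]
  push_cast
  ring

end Deterministic

open ProbabilityTheory

section RightEndpoint

variable {Ω : Type*} [MeasurableSpace Ω] {μ : Measure Ω} {Y : Ω → ℝ} {γ : ℝ}

lemma measure_le_eq_one_of_rightEndpoint_lt [IsProbabilityMeasure μ]
    (hY : rightEndpoint μ Y = γ) {r : ℝ} (hr : γ < r) : μ {ω | Y ω ≤ r} = 1 := by
  by_contra hne
  have hr' : (r : EReal) ≤ rightEndpoint μ Y :=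
    le_sSup ⟨r, lt_of_le_of_ne prob_le_one hne, rfl⟩
  rw [hY, EReal.coe_le_coe_iff] at hr'
  exact hr'.not_gt hr

lemma measure_le_lt_one_of_lt_rightEndpoint (hY : rightEndpoint μ Y = γ) {t : ℝ} (ht : t < γ) :
    μ {ω | Y ω ≤ t} < 1 := by
  have ht' : (t : EReal) < rightEndpoint μ Y := hY ▸ EReal.coe_lt_coe_iff.2 ht
  obtain ⟨_, ⟨r, hr, rfl⟩, htr⟩ := lt_sSup_iff.1 ht'
  exact (measure_mono fun ω (h : Y ω ≤ t) =>
    h.trans (EReal.coe_lt_coe_iff.1 htr).le).trans_lt hr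

variable [IsProbabilityMeasure (μ.map Y)] (hYm : Measurable Y)
include hYm

lemma cdf_map_eq_toReal (t : ℝ) : cdf (μ.map Y) t = (μ {ω | Y ω ≤ t}).toReal := by
  rw [cdf_eq_real, measureReal_def, Measure.map_apply hYm measurableSet_Iic]
  rfl

lemma toReal_measure_lt_eq_one_sub_cdf_map [IsProbabilityMeasure μ] (t : ℝ) :
    (μ {ω | t < Y ω}).toReal = 1 - cdf (μ.map Y) t := by
  rw [cdf_map_eq_toReal hYm, ← measureReal_def, ← measureReal_def,
    ← probReal_compl_eq_one_sub (measurableSet_le hYm measurable_const)]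
  congr 1
  ext ω
  simp

lemma cdf_map_lt_one_of_lt_rightEndpoint (hY : rightEndpoint μ Y = γ) {t : ℝ} (ht : t < γ) :
    cdf (μ.map Y) t < 1 := by
  rw [cdf_map_eq_toReal hYm]
  exact ENNReal.toReal_lt_of_lt_ofReal
    (by simpa using measure_le_lt_one_of_lt_rightEndpoint hY ht)

lemma cdf_map_eq_one_of_rightEndpoint [IsProbabilityMeasure μ] (hY : rightEndpoint μ Y = γ) :
    cdf (μ.map Y) γ = 1 := by
  have hright : Tendsto (cdf (μ.map Y)) (𝓝[>] γ) (𝓝 (cdf (μ.map Y) γ)) :=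
    ((cdf (μ.map Y)).right_continuous γ).tendsto.mono_left
      (nhdsWithin_mono _ Ioi_subset_Ici_self)
  refine tendsto_nhds_unique hright (tendsto_const_nhds.congr' ?_)
  filter_upwards [self_mem_nhdsWithin] with r hr
  rw [cdf_map_eq_toReal hYm, measure_le_eq_one_of_rightEndpoint_lt hY hr, ENNReal.toReal_one]

end RightEndpoint

lemma tendsto_cdf_nhdsLT {ν : Measure ℝ} [IsProbabilityMeasure ν] {s : ℝ} (hs : ν {s} = 0) :
    Tendsto (cdf ν) (𝓝[<] s) (𝓝 (cdf ν s)) := by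
  have hjump := (cdf ν).measure_singleton s
  rw [measure_cdf, hs, eq_comm, ENNReal.ofReal_eq_zero, sub_nonpos] at hjump
  have hleft : Function.leftLim (cdf ν) s = cdf ν s :=
    le_antisymm ((cdf ν).mono.leftLim_le le_rfl) hjump
  exact hleft ▸ (cdf ν).mono.tendsto_leftLim s

lemma ae_le_of_cdf_eq_one {ν : Measure ℝ} [IsProbabilityMeasure ν] {γ : ℝ}
    (h : cdf ν γ = 1) : ∀ᵐ y ∂ν, y ≤ γ := by
  have : ν (Iic γ) = 1 := by rw [← ofReal_cdf, h, ENNReal.ofReal_one]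
  exact (prob_compl_eq_zero_iff measurableSet_Iic).2 this

section Stationary

variable {Ω : Type*} [MeasurableSpace Ω] {μ : Measure Ω} {X : ℕ → Ω → ℝ}

lemma seqShift_iterate_apply (i : ℕ) (y : ℕ → ℝ) (n : ℕ) :
    seqShift^[i] y n = y (n + i) := by
  induction i generalizing y with
  | zero => rfl
  | succ i ih => rw [Function.iterate_succ_apply, ih, seqShift, add_assoc]

lemma map_eq_map_zero (hX : ∀ n, Measurable (X n))
    (hstat : MeasurePreserving seqShift (μ.map (path X)) (μ.map (path X))) (i : ℕ) :
    μ.map (X i) = μ.map (X 0) := by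
  have hpath : Measurable (path X) := measurable_pi_lambda _ hX
  calc μ.map (X i) = (μ.map (path X)).map (fun y => y i) := by
        rw [Measure.map_map (measurable_pi_apply i) hpath]; rfl
    _ = ((μ.map (path X)).map (seqShift^[i])).map (fun y => y 0) := by
        rw [Measure.map_map (measurable_pi_apply 0) (hstat.iterate i).measurable]
        congr 1
        funext y
        simp [seqShift_iterate_apply]
    _ = μ.map (X 0) := by
        rw [(hstat.iterate i).map_eq, Measure.map_map (measurable_pi_apply 0) hpath]
        rfl

variable [IsProbabilityMeasure μ]

theorem ae_tendsto_frequency (hX : ∀ n, Measurable (X n))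
    (herg : Ergodic seqShift (μ.map (path X))) {P : ℝ → Prop} [DecidablePred P]
    (hP : MeasurableSet {v | P v}) :
    ∀ᵐ ω ∂μ, Tendsto (fun n => (#{i ∈ range n | P (X i ω)} : ℝ) / n) atTop
      (𝓝 (μ {ω | P (X 0 ω)}).toReal) := by
  have hpath : Measurable (path X) := measurable_pi_lambda _ hX
  have := Measure.isProbabilityMeasure_map (μ := μ) hpath.aemeasurable
  set S := {y : ℕ → ℝ | P (y 0)}
  have hS : MeasurableSet S := measurable_pi_apply 0 hP
  have hint : ∫ y, S.indicator 1 y ∂(μ.map (path X)) = (μ {ω | P (X 0 ω)}).toReal := by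
    rw [integral_indicator_one hS, measureReal_def, Measure.map_apply hpath hS]
    rfl
  have hsum : ∀ ω n, birkhoffSum seqShift (S.indicator 1) n (path X ω) =
      (#{i ∈ range n | P (X i ω)} : ℝ) := by
    intro ω n
    simp [birkhoffSum, indicator_apply, seqShift_iterate_apply, S, path]
  filter_upwards [ae_of_ae_map hpath.aemeasurable (ae_tendsto_birkhoffAverage herg
    (measurable_one.indicator hS) ((integrable_const 1).indicator hS))] with ω hω
  rw [hint] at hω
  refine hω.congr fun n => ?_
  rw [birkhoffAverage, hsum, smul_eq_mul, inv_mul_eq_div]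

lemma ae_tendsto_empiricalCDF [IsProbabilityMeasure (μ.map (X 0))]
    (hX : ∀ n, Measurable (X n)) (herg : Ergodic seqShift (μ.map (path X))) (t : ℝ) :
    ∀ᵐ ω ∂μ, Tendsto (empiricalCDF (path X ω) · t) atTop (𝓝 (cdf (μ.map (X 0)) t)) := by
  rw [cdf_map_eq_toReal (hX 0)]
  exact ae_tendsto_frequency hX herg (P := (· ≤ t)) measurableSet_Iic

end Stationary

theorem stmt14 {Ω : Type*} [MeasurableSpace Ω] (μ : Measure Ω) [IsProbabilityMeasure μ]
    (X : ℕ → Ω → ℝ) (hX : ∀ n, Measurable (X n))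
    (herg : Ergodic seqShift (Measure.map (path X) μ))
    (γ : ℝ) (hγ : rightEndpoint μ (X 0) = (γ : EReal))
    (a : ℝ) (ha : 0 < a)
    (h1 : μ {ω | X 0 ω = γ} = 0) (h2 : μ {ω | X 0 ω = γ - a} = 0)
    (k : ℕ → ℕ) (hk : ∀ n, 1 ≤ n → 1 ≤ k n ∧ k n ≤ n)
    (hk1 : Tendsto (fun n => (k n : ℝ) / n) atTop (𝓝 1))
    (N : ℝ → Ω → ℕ) (hN : ∀ᵐ ω ∂μ, Tendsto (fun t => N t ω) atTop atTop) :
    ∀ᵐ ω ∂μ, Tendsto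
      (fun t => (nearCount (k (N t ω)) (N t ω) a (path X ω) : ℝ) / (N t ω)) atTop
      (𝓝 ((μ {ω' | γ - a < X 0 ω'}).toReal)) := by
  have := Measure.isProbabilityMeasure_map (μ := μ) (hX 0).aemeasurable
  have hatom : ∀ s, μ {ω | X 0 ω = s} = 0 → μ.map (X 0) {s} = 0 := fun s hs => by
    rwa [Measure.map_apply (hX 0) (measurableSet_singleton s)]
  have hFγ := cdf_map_eq_one_of_rightEndpoint (hX 0) hγ
  have hbounded : ∀ᵐ ω ∂μ, ∀ i, X i ω ≤ γ := ae_all_iff.2 fun i =>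
    ae_of_ae_map (hX i).aemeasurable <| map_eq_map_zero hX herg.toMeasurePreserving i ▸
      ae_le_of_cdf_eq_one hFγ
  have hemp : ∀ᵐ ω ∂μ, ∀ q : ℚ, Tendsto (empiricalCDF (path X ω) · q) atTop
      (𝓝 (cdf (μ.map (X 0)) q)) :=
    ae_all_iff.2 fun q => ae_tendsto_empiricalCDF hX herg q
  rw [toReal_measure_lt_eq_one_sub_cdf_map (hX 0)]
  filter_upwards [hbounded, hemp, ae_tendsto_empiricalCDF hX herg (γ - a), hN]
    with ω hωγ hωq hωa hωN
  refine (tendsto_nearCount_div (path X ω) ha hωγ hωq hωa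
    (fun t => cdf_map_lt_one_of_lt_rightEndpoint (hX 0) hγ) ?_
    (tendsto_cdf_nhdsLT (hatom _ h2)) hk hk1).comp hωN
  exact hFγ ▸ tendsto_cdf_nhdsLT (hatom _ h1)
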